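/- arXiv:1911.07483 — 4 statements merged into one kernel-verified Lean document; each statement's English description precedes it below -/
import Mathlib

section
/- Let α₁, α₂, α₃, α₄ be integers each greater than 1 and α₂₁ an integer with 0 < α₂₁ < α₁−1, and define n₁, n₂, n₃, n₄ by Komeda's formulas. If n₁ < n₂, α₁ > α₄, and α₂ > α₂₁+1, then α₁ + α₂₁ + 1 ≥ α₂ + α₄. -/
/-- Remark 2 of the paper: for Komeda's parametrization of a 4-generated
pseudo-symmetric numerical semigroup, if `n₁ < n₂`, `α₁ > α₄` and
`α₂ > α₂₁ + 1`, then `α₁ + α₂₁ + 1 ≥ α₂ + α₄`. -/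
theorem stmt1 (α₁ α₂ α₃ α₄ α₂₁ n₁ n₂ n₃ n₄ : ℤ)
    (h₁ : 1 < α₁) (h₂ : 1 < α₂) (h₃ : 1 < α₃) (h₄ : 1 < α₄)
    (h₂₁ : 0 < α₂₁) (h₂₁' : α₂₁ < α₁ - 1)
    (hn₁ : n₁ = α₂ * α₃ * (α₄ - 1) + 1)
    (hn₂ : n₂ = α₂₁ * α₃ * α₄ + (α₁ - α₂₁ - 1) * (α₃ - 1) + α₃)
    (hn₃ : n₃ = α₁ * α₄ + (α₁ - α₂₁ - 1) * (α₂ - 1) * (α₄ - 1) - α₄ + 1)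
    (hn₄ : n₄ = α₁ * α₂ * (α₃ - 1) + α₂₁ * (α₂ - 1) + α₂)
    (h12 : n₁ < n₂) (hα14 : α₁ > α₄) (hα2 : α₂ > α₂₁ + 1) :
    α₁ + α₂₁ + 1 ≥ α₂ + α₄ := by
  subst hn₁ hn₂
  by_contra h
  push_neg at h
  nlinarith [mul_pos (sub_pos.2 h₄) (sub_pos.2 h₃), mul_pos (sub_pos.2 hα2) (sub_pos.2 h₃),
    mul_nonneg (mul_nonneg (sub_nonneg.2 hα2.le) (sub_nonneg.2 h₃.le)) (sub_nonneg.2 h₄.le),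
    mul_pos (sub_pos.2 h) (sub_pos.2 h₃)]
end

section
/- Let K be a field and A = K[X₁,X₂,X₃,X₄]. Let α₁, α₂, α₃ be integers each greater than 1 and α₂₁ an integer with 0 < α₂₁ < α₁−1, and let f₁ = X₁^{α₁} − X₃X₄, f₂ = X₂^{α₂} − X₁^{α₂₁}X₄, f₃ = X₃^{α₃} − X₁^{α₁−α₂₁−1}X₂, f₄ = X₄² − X₁X₂^{α₂−1}X₃^{α₃−1}, f₅ = X₁^{α₂₁+1}X₃^{α₃−1} − X₂X₄. Then for every integer j with 1 ≤ j ≤ α₃, the polynomial f_{6+j} = X₁^{(j−1)α₁+(j+1)α₂₁+1} X₃^{α₃−j} − X₂^{jα₂+1} belongs to the ideal of A generated by f₁, f₂, f₃, f₄, f₅. -/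
open MvPolynomial

/-- For each `1 ≤ j ≤ α₃`, the polynomial
`f₍₆₊ⱼ₎ = X₁^((j-1)α₁+(j+1)α₂₁+1) X₃^(α₃-j) - X₂^(jα₂+1)` belongs to the ideal
generated by the five defining binomials `f₁, …, f₅` of a 4-generated
pseudo-symmetric monomial curve with `α₄ = 2`.
(Variables: `X 0 = X₁`, `X 1 = X₂`, `X 2 = X₃`, `X 3 = X₄`.) -/
theorem stmt5 (K : Type*) [Field K] (α₁ α₂ α₃ α₂₁ : ℕ)
    (h₁ : 1 < α₁) (h₂ : 1 < α₂) (h₃ : 1 < α₃)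
    (h₂₁ : 0 < α₂₁) (h₂₁' : α₂₁ < α₁ - 1) :
    ∀ j : ℕ, 1 ≤ j → j ≤ α₃ →
      (X 0 ^ ((j - 1) * α₁ + (j + 1) * α₂₁ + 1) * X 2 ^ (α₃ - j) - X 1 ^ (j * α₂ + 1) :
          MvPolynomial (Fin 4) K) ∈
        Ideal.span ({X 0 ^ α₁ - X 2 * X 3,
                     X 1 ^ α₂ - X 0 ^ α₂₁ * X 3,
                     X 2 ^ α₃ - X 0 ^ (α₁ - α₂₁ - 1) * X 1,
                     X 3 ^ 2 - X 0 * X 1 ^ (α₂ - 1) * X 2 ^ (α₃ - 1),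
                     X 0 ^ (α₂₁ + 1) * X 2 ^ (α₃ - 1) - X 1 * X 3} :
          Set (MvPolynomial (Fin 4) K)) := by
  set S : Set (MvPolynomial (Fin 4) K) :=
    {X 0 ^ α₁ - X 2 * X 3,
     X 1 ^ α₂ - X 0 ^ α₂₁ * X 3,
     X 2 ^ α₃ - X 0 ^ (α₁ - α₂₁ - 1) * X 1,
     X 3 ^ 2 - X 0 * X 1 ^ (α₂ - 1) * X 2 ^ (α₃ - 1),
     X 0 ^ (α₂₁ + 1) * X 2 ^ (α₃ - 1) - X 1 * X 3} with hS
  have hf1 : (X 0 ^ α₁ - X 2 * X 3 : MvPolynomial (Fin 4) K) ∈ Ideal.span S :=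
    Ideal.subset_span (by simp [hS])
  have hf2 : (X 1 ^ α₂ - X 0 ^ α₂₁ * X 3 : MvPolynomial (Fin 4) K) ∈ Ideal.span S :=
    Ideal.subset_span (by simp [hS])
  have hf5 : (X 0 ^ (α₂₁ + 1) * X 2 ^ (α₃ - 1) - X 1 * X 3 : MvPolynomial (Fin 4) K) ∈
      Ideal.span S :=
    Ideal.subset_span (by simp [hS])
  intro j hj
  induction j, hj using Nat.le_induction with
  | base =>
    intro _
    have key : (X 0 ^ ((1 - 1) * α₁ + (1 + 1) * α₂₁ + 1) * X 2 ^ (α₃ - 1)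
          - X 1 ^ (1 * α₂ + 1) : MvPolynomial (Fin 4) K)
        = X 0 ^ α₂₁ * (X 0 ^ (α₂₁ + 1) * X 2 ^ (α₃ - 1) - X 1 * X 3)
          - X 1 * (X 1 ^ α₂ - X 0 ^ α₂₁ * X 3) := by
      norm_num
      ring
    rw [key]
    exact sub_mem (Ideal.mul_mem_left _ _ hf5) (Ideal.mul_mem_left _ _ hf2)
  | succ n hn ih =>
    intro hn'
    have hmem := ih (by omega)
    obtain ⟨m, rfl⟩ : ∃ m, n = m + 1 := ⟨n - 1, by omega⟩
    obtain ⟨t, ht⟩ : ∃ t, α₃ - (m + 1) = t + 1 ∧ α₃ - (m + 1 + 1) = t :=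
      ⟨α₃ - (m + 2), by omega⟩
    have key : (X 0 ^ ((m + 1 + 1 - 1) * α₁ + (m + 1 + 1 + 1) * α₂₁ + 1)
          * X 2 ^ (α₃ - (m + 1 + 1)) - X 1 ^ ((m + 1 + 1) * α₂ + 1) : MvPolynomial (Fin 4) K)
        = X 1 ^ α₂ * (X 0 ^ ((m + 1 - 1) * α₁ + (m + 1 + 1) * α₂₁ + 1) * X 2 ^ (α₃ - (m + 1))
              - X 1 ^ ((m + 1) * α₂ + 1))
          + X 0 ^ ((m + 1 - 1) * α₁ + (m + 1 + 1) * α₂₁ + 1) * X 2 ^ (α₃ - (m + 1 + 1))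
            * (X 0 ^ α₂₁ * (X 0 ^ α₁ - X 2 * X 3) - X 2 * (X 1 ^ α₂ - X 0 ^ α₂₁ * X 3)) := by
      rw [ht.1, ht.2]
      simp only [Nat.add_sub_cancel]
      ring
    rw [key]
    exact add_mem (Ideal.mul_mem_left _ _ hmem)
      (Ideal.mul_mem_left _ _
        (sub_mem (Ideal.mul_mem_left _ _ hf1) (Ideal.mul_mem_left _ _ hf2)))
end

section
/- Let K be a field and A = K[X₁,X₂,X₃,X₄]. Let α₁, α₂, α₃ be integers > 1, α₂₁ an integer with 0 < α₂₁ < α₁−1, and k a positive integer with k ≤ α₃. Let J ⊆ A be the monomial ideal generated by X₃X₄, X₁^{α₂₁}X₄, X₃^{α₃}, X₄², X₂X₄, X₂^{α₂}X₃, X₂^{kα₂+1}, and X₁^{(j−1)α₁+(j+1)α₂₁+1} X₃^{α₃−j} for j = 1, …, k−1. Then, denoting by H(n) the K-dimension of the degree-n homogeneous component of the graded ring A/J, the power series identity (1−t)⁴ · Σ_{n≥0} H(n) t^n = P(t) holds, where P(t) = 1 − 3t² + 3t³ − t⁴ − t^{α₂₁+1}(1−t)³ − t^{α₃}(1−t)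 − t^{α₂+1}(1−t)(1−t^{α₃−1}) − t^{kα₂+1}(1−t)² − r(t), with r(t) = 0 if k = 1 and r(t) = Σ_{j=2}^{k} t^{(k−j)α₁+(k−j+2)α₂₁+α₃+j−k}(1−t)²(1−t^{α₂}) if k > 1. -/
open MvPolynomial

/-- The Hilbert function of the graded quotient `A/J` of
`A = K[X₁,X₂,X₃,X₄]` by a homogeneous ideal `J`:
`n ↦ dim_K (A/J)_n`, realized as the dimension of the image of the space of
degree-`n` homogeneous polynomials in `A/J`. -/
noncomputable def gradedHilbert (K : Type*) [Field K]
    (J : Ideal (MvPolynomial (Fin 4) K)) (n : ℕ) : ℕ :=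
  Module.finrank K
    (Submodule.map (Ideal.Quotient.mkₐ K J).toLinearMap
      (homogeneousSubmodule (Fin 4) K n))

/-!
A monomial `X₁ᵃ · m`, with `m` a monomial in `X₂, X₃, X₄`, lies outside `J` exactly when `m` is
one of finitely many tails and `a` is below a bound depending only on `m`, possibly `∞`:
`m = X₄` with `a < α₂₁`; `m = X₂ᵇ` with `b ≤ kα₂`, unbounded; `m = X₂ᵇX₃ᶜ` with `b < α₂` and
`1 ≤ c < α₃`, unbounded if `c ≤ α₃ - k` and otherwise bounded by the exponent of `X₁` in the
generator with `j = α₃ - c`. The standard monomials of degree `n` give a basis of `(A/J)ₙ`, so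
each such ray contributes `t^deg(m) (1 - t^bound) / (1 - t)` to the Hilbert series, and after
multiplying by `(1 - t)⁴` only geometric sums are left, which add up to `P(t)`.
-/

open Finsupp

theorem Finsupp.single_add_single_le_iff {σ : Type*} {i j : σ} (hij : i ≠ j) {a b : ℕ}
    {d : σ →₀ ℕ} : single i a + single j b ≤ d ↔ a ≤ d i ∧ b ≤ d j := by
  classical
  simp only [Finsupp.le_def, coe_add, Pi.add_apply, single_apply]
  refine ⟨fun h => ⟨by simpa [hij.symm] using h i, by simpa [hij] using h j⟩,
    fun ⟨hi, hj⟩ x => ?_⟩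
  by_cases hx : i = x <;> by_cases hx' : j = x <;> simp_all

theorem Finsupp.erase_single_add {σ : Type*} {i : σ} {t : σ →₀ ℕ} (ht : t i = 0) (a : ℕ) :
    (single i a + t).erase i = t := by
  rw [erase_add, erase_single, zero_add, erase_of_notMem_support (by simpa using ht)]

namespace MvPolynomial

variable {σ K : Type*} [Field K] {S : Set (σ →₀ ℕ)}

theorem linearIndependent_mk_monomial {D : Set (σ →₀ ℕ)} (hD : ∀ d ∈ D, ∀ g ∈ S, ¬ g ≤ d) :
    LinearIndependent K (fun d : D =>
      Ideal.Quotient.mkₐ K (Ideal.span ((monomial · (1 : K)) '' S)) (monomial (d : σ →₀ ℕ) 1)) := by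
  have hmon :=
    (basisMonomials σ K).linearIndependent.comp ((↑) : D → σ →₀ ℕ) Subtype.val_injective
  rw [coe_basisMonomials] at hmon
  refine hmon.map (f := (Ideal.Quotient.mkₐ K _).toLinearMap) ?_
  rw [Submodule.disjoint_def]
  intro p hpD hpJ
  have hsupp : ↑p.support ⊆ D := by
    rwa [Set.range_comp, Subtype.range_coe, ← restrictSupport_eq_span] at hpD
  rw [LinearMap.mem_ker, AlgHom.toLinearMap_apply, Ideal.Quotient.mkₐ_eq_mk,
    Ideal.Quotient.eq_zero_iff_mem, mem_ideal_span_monomial_image] at hpJ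
  rw [← support_eq_empty, Finset.eq_empty_iff_forall_notMem]
  intro d hd
  obtain ⟨g, hg, hgd⟩ := hpJ d hd
  exact hD d (hsupp hd) g hg hgd

theorem map_mk_homogeneousSubmodule_eq_span (n : ℕ) (B : Finset (σ →₀ ℕ))
    (hB : ∀ d, d ∈ B ↔ d.degree = n ∧ ∀ g ∈ S, ¬ g ≤ d) :
    Submodule.map (Ideal.Quotient.mkₐ K (Ideal.span ((monomial · (1 : K)) '' S))).toLinearMap
        (homogeneousSubmodule σ K n) =
      Submodule.span K (Set.range fun d : (B : Set (σ →₀ ℕ)) =>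
        Ideal.Quotient.mkₐ K (Ideal.span ((monomial · (1 : K)) '' S)) (monomial (d : σ →₀ ℕ) 1)) := by
  rw [homogeneousSubmodule_eq_finsupp_supported]
  change Submodule.map _ (restrictSupport K _) = _
  rw [restrictSupport_eq_span, Submodule.map_span, ← Set.image_comp]
  apply le_antisymm
  · rw [Submodule.span_le]
    rintro _ ⟨d, hdeg, rfl⟩
    by_cases hdB : d ∈ B
    · exact Submodule.subset_span ⟨⟨d, hdB⟩, rfl⟩
    · obtain ⟨g, hg, hgd⟩ : ∃ g ∈ S, g ≤ d := by
        by_contra! h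
        exact hdB ((hB d).2 ⟨hdeg, h⟩)
      have hdJ : monomial d (1 : K) ∈ Ideal.span ((monomial · (1 : K)) '' S) :=
        mem_ideal_span_monomial_image.2 fun d' hd' =>
          ⟨g, hg, Finset.mem_singleton.1 (support_monomial_subset hd') ▸ hgd⟩
      simp only [Function.comp_apply, AlgHom.toLinearMap_apply, Ideal.Quotient.mkₐ_eq_mk,
        Ideal.Quotient.eq_zero_iff_mem.2 hdJ, SetLike.mem_coe, Submodule.zero_mem]
  · apply Submodule.span_mono
    rintro _ ⟨⟨d, hd⟩, rfl⟩
    exact ⟨d, ((hB d).1 hd).1, rfl⟩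

theorem finrank_map_mk_homogeneousSubmodule (n : ℕ) (B : Finset (σ →₀ ℕ))
    (hB : ∀ d, d ∈ B ↔ d.degree = n ∧ ∀ g ∈ S, ¬ g ≤ d) :
    Module.finrank K (Submodule.map
        (Ideal.Quotient.mkₐ K (Ideal.span ((monomial · (1 : K)) '' S))).toLinearMap
        (homogeneousSubmodule σ K n)) = B.card := by
  rw [map_mk_homogeneousSubmodule_eq_span n B hB,
    finrank_span_eq_card (linearIndependent_mk_monomial fun d hd => ((hB d).1 hd).2),
    ← Set.toFinset_card, Finset.toFinset_coe]

end MvPolynomial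

namespace PowerSeries

variable {R : Type*} [CommRing R]

noncomputable def onesBelow (m : ℕ∞) : R⟦X⟧ := mk fun a => if (a : ℕ∞) < m then 1 else 0

theorem onesBelow_coe (m : ℕ) : (onesBelow m : R⟦X⟧) = ∑ i ∈ Finset.range m, X ^ i := by
  ext n
  simp [onesBelow, coeff_X_pow]

theorem one_sub_X_mul_onesBelow_coe (m : ℕ) : (1 - X) * (onesBelow m : R⟦X⟧) = 1 - X ^ m := by
  rw [onesBelow_coe, mul_neg_geom_sum]

theorem one_sub_X_mul_onesBelow_top : (1 - X) * (onesBelow ⊤ : R⟦X⟧) = 1 := by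
  have htop : (onesBelow ⊤ : R⟦X⟧) = mk 1 := by ext; simp [onesBelow]
  rw [htop, mul_comm, mk_one_mul_one_sub_eq_one]

end PowerSeries

open PowerSeries (onesBelow)

section Rays

variable {σ κ : Type*} [DecidableEq σ]

noncomputable def rayMonomials (i : σ) (ι : Finset κ) (τ : κ → σ →₀ ℕ) (β : κ → ℕ∞) (n : ℕ) :
    Finset (σ →₀ ℕ) :=
  {k ∈ ι | (τ k).degree ≤ n ∧ ((n - (τ k).degree : ℕ) : ℕ∞) < β k}.image
    fun k => single i (n - (τ k).degree) + τ k

variable {i : σ} {ι : Finset κ} {τ : κ → σ →₀ ℕ} {β : κ → ℕ∞}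

theorem mem_rayMonomials (hτ : ∀ k ∈ ι, τ k i = 0) {n : ℕ} {d : σ →₀ ℕ} :
    d ∈ rayMonomials i ι τ β n ↔
      d.degree = n ∧ ∃ k ∈ ι, d.erase i = τ k ∧ (d i : ℕ∞) < β k := by
  simp only [rayMonomials, Finset.mem_image, Finset.mem_filter]
  constructor
  · rintro ⟨k, ⟨hk, hdeg, hβ⟩, rfl⟩
    refine ⟨by rw [map_add, degree_single]; omega, k, hk, erase_single_add (hτ k hk) _, ?_⟩
    simpa [hτ k hk] using hβ
  · rintro ⟨rfl, k, hk, hdk, hβ⟩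
    have hd : d = single i (d i) + τ k := by rw [← hdk, single_add_erase]
    have hdeg : d.degree = d i + (τ k).degree := by
      conv_lhs => rw [hd]
      rw [map_add, degree_single]
    have hdi : d.degree - (τ k).degree = d i := by omega
    refine ⟨k, ⟨hk, by omega, by rwa [hdi]⟩, ?_⟩
    rw [hdi, ← hd]

theorem card_rayMonomials (hτ : ∀ k ∈ ι, τ k i = 0) (hinj : Set.InjOn τ ι) (n : ℕ) :
    (rayMonomials i ι τ β n).card =
      ∑ k ∈ ι, if (τ k).degree ≤ n ∧ ((n - (τ k).degree : ℕ) : ℕ∞) < β k then 1 else 0 := by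
  rw [rayMonomials, Finset.card_image_of_injOn, Finset.card_filter]
  intro k hk k' hk' h
  have := congrArg (Finsupp.erase i) h
  simp only [erase_single_add (hτ k (Finset.mem_filter.1 hk).1),
    erase_single_add (hτ k' (Finset.mem_filter.1 hk').1)] at this
  exact hinj (Finset.mem_filter.1 hk).1 (Finset.mem_filter.1 hk').1 this

theorem hilbertSeries_eq_sum_rays {R K : Type*} [CommRing R] [Field K] {S : Set (σ →₀ ℕ)}
    (hτ : ∀ k ∈ ι, τ k i = 0) (hinj : Set.InjOn τ ι)
    (hS : ∀ d, (∀ g ∈ S, ¬ g ≤ d) ↔ ∃ k ∈ ι, d.erase i = τ k ∧ (d i : ℕ∞) < β k) :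
    PowerSeries.mk (fun n => (Module.finrank K (Submodule.map
        (Ideal.Quotient.mkₐ K (Ideal.span ((monomial · (1 : K)) '' S))).toLinearMap
        (homogeneousSubmodule σ K n)) : R)) =
      ∑ k ∈ ι, PowerSeries.X ^ (τ k).degree * onesBelow (β k) := by
  ext n
  rw [PowerSeries.coeff_mk, finrank_map_mk_homogeneousSubmodule n (rayMonomials i ι τ β n)
      fun d => by rw [mem_rayMonomials hτ, hS], card_rayMonomials hτ hinj, map_sum]
  simp only [Nat.cast_sum, Nat.cast_ite, Nat.cast_one, Nat.cast_zero]
  refine Finset.sum_congr rfl fun k _ => ?_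
  rw [PowerSeries.coeff_X_pow_mul']
  by_cases h : (τ k).degree ≤ n
  · simp only [h, true_and, if_true, onesBelow, PowerSeries.coeff_mk]
  · simp [h]

end Rays

section TangentCone

def x₁Exp (α₁ α₂₁ j : ℕ) : ℕ := (j - 1) * α₁ + (j + 1) * α₂₁ + 1

theorem x₁Exp_mono (α₁ α₂₁ : ℕ) : Monotone (x₁Exp α₁ α₂₁) := fun j j' h => by
  unfold x₁Exp; gcongr

variable {α₁ α₂ α₃ α₂₁ k : ℕ}

theorem forall_lt_x₁Exp_or_lt_iff {a c : ℕ} (hc : c < α₃) (hk : k ≤ α₃) :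
    (∀ j, 1 ≤ j → j ≤ k - 1 → a < x₁Exp α₁ α₂₁ j ∨ c < α₃ - j) ↔
      c ≤ α₃ - k ∨ a < x₁Exp α₁ α₂₁ (α₃ - c) := by
  constructor
  · intro h
    by_contra! hcon
    have := h (α₃ - c) (by omega) (by omega)
    omega
  · rintro (hck | ha) j hj₁ hj₂
    · omega
    · by_cases hj : α₃ - c ≤ j
      · exact .inl (ha.trans_le (x₁Exp_mono α₁ α₂₁ hj))
      · omega

variable (α₁ α₂ α₃ α₂₁ k) in
def tangentConeExps : Set (Fin 4 →₀ ℕ) :=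
  {single 2 1 + single 3 1, single 0 α₂₁ + single 3 1, single 2 α₃, single 3 2,
    single 1 1 + single 3 1, single 1 α₂ + single 2 1, single 1 (k * α₂ + 1)} ∪
  (fun j => single 0 (x₁Exp α₁ α₂₁ j) + single 2 (α₃ - j)) '' Set.Icc 1 (k - 1)

variable (α₁ α₂ α₃ α₂₁ k) in
theorem image_monomial_tangentConeExps (K : Type*) [Field K] :
    (monomial · (1 : K)) '' tangentConeExps α₁ α₂ α₃ α₂₁ k =
      ({X 2 * X 3, X 0 ^ α₂₁ * X 3, X 2 ^ α₃, X 3 ^ 2, X 1 * X 3, X 1 ^ α₂ * X 2,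
        X 1 ^ (k * α₂ + 1)} : Set (MvPolynomial (Fin 4) K)) ∪
      {g | ∃ j : ℕ, 1 ≤ j ∧ j ≤ k - 1 ∧
        g = X 0 ^ ((j - 1) * α₁ + (j + 1) * α₂₁ + 1) * X 2 ^ (α₃ - j)} := by
  have hX : ∀ i : Fin 4, (X i : MvPolynomial (Fin 4) K) = monomial (single i 1) 1 := fun _ => rfl
  simp only [tangentConeExps, Set.image_union, Set.image_insert_eq, Set.image_singleton,
    Set.image_image, hX, monomial_pow, monomial_mul, one_pow, mul_one, smul_single, smul_eq_mul]
  congr 1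
  ext g
  simp only [Set.mem_image, Set.mem_Icc, Set.mem_ofPred_eq, x₁Exp]
  constructor
  · rintro ⟨j, ⟨hj₁, hj₂⟩, rfl⟩
    exact ⟨j, hj₁, hj₂, rfl⟩
  · rintro ⟨j, hj₁, hj₂, rfl⟩
    exact ⟨j, ⟨hj₁, hj₂⟩, rfl⟩

noncomputable def tailExp (t : ℕ × ℕ × ℕ) : Fin 4 →₀ ℕ :=
  single 1 t.1 + single 2 t.2.1 + single 3 t.2.2

theorem tailExp_apply_zero (t : ℕ × ℕ × ℕ) : tailExp t 0 = 0 := by simp [tailExp]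

theorem tailExp_injective : Function.Injective tailExp := by
  rintro ⟨b, c, e⟩ ⟨b', c', e'⟩ h
  simpa [Finsupp.ext_iff, Fin.forall_fin_succ, tailExp, single_apply] using h

theorem degree_tailExp (t : ℕ × ℕ × ℕ) : (tailExp t).degree = t.1 + t.2.1 + t.2.2 := by
  simp only [tailExp, map_add, degree_single]

theorem erase_zero_eq_tailExp_iff (d : Fin 4 →₀ ℕ) (t : ℕ × ℕ × ℕ) :
    d.erase 0 = tailExp t ↔ t = (d 1, d 2, d 3) := by
  obtain ⟨b, c, e⟩ := t
  simp [Finsupp.ext_iff, Fin.forall_fin_succ, tailExp, single_apply, eq_comm]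

variable (α₂ α₃ k) in
def tangentConeTails : Finset (ℕ × ℕ × ℕ) :=
  {(0, 0, 1)} ∪ Finset.range (k * α₂ + 1) ×ˢ {(0, 0)} ∪
    Finset.range α₂ ×ˢ Finset.Ico 1 α₃ ×ˢ {0}

variable (α₁ α₃ α₂₁ k) in
def tangentConeRayLength (t : ℕ × ℕ × ℕ) : ℕ∞ :=
  if t.2.2 = 1 then α₂₁ else if t.2.1 ≤ α₃ - k then ⊤ else x₁Exp α₁ α₂₁ (α₃ - t.2.1)

theorem forall_not_le_tangentConeExps_iff (hk₀ : 0 < k) (hk : k ≤ α₃) (d : Fin 4 →₀ ℕ) :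
    (∀ g ∈ tangentConeExps α₁ α₂ α₃ α₂₁ k, ¬ g ≤ d) ↔
      ∃ t ∈ tangentConeTails α₂ α₃ k,
        d.erase 0 = tailExp t ∧ (d 0 : ℕ∞) < tangentConeRayLength α₁ α₃ α₂₁ k t := by
  simp only [tangentConeExps, Set.mem_union, Set.mem_insert_iff, Set.mem_singleton_iff, or_imp,
    forall_and, forall_eq, and_imp, Set.forall_mem_image, Set.mem_Icc, single_le_iff,
    single_add_single_le_iff (by decide : (2 : Fin 4) ≠ 3),
    single_add_single_le_iff (by decide : (0 : Fin 4) ≠ 3),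
    single_add_single_le_iff (by decide : (1 : Fin 4) ≠ 3),
    single_add_single_le_iff (by decide : (1 : Fin 4) ≠ 2),
    single_add_single_le_iff (by decide : (0 : Fin 4) ≠ 2), erase_zero_eq_tailExp_iff,
    and_left_comm (b := _ = _), exists_eq_left, not_and_or, not_le]
  simp only [tangentConeTails, Finset.mem_union, Finset.mem_product,
    Finset.mem_singleton, Finset.mem_range, Finset.mem_Ico, Prod.mk.injEq]
  by_cases hc : d 2 < α₃
  · rw [forall_lt_x₁Exp_or_lt_iff hc hk]
    have hα₂ : α₂ ≤ k * α₂ := Nat.le_mul_of_pos_left α₂ hk₀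
    simp only [tangentConeRayLength]
    split_ifs <;> simp only [Nat.cast_lt, ENat.natCast_lt_top, and_true] <;>
      constructor <;> intro h <;> omega
  · exact iff_of_false (fun h => hc h.1.2.2.1) fun ⟨h, _⟩ => hc (by omega)

theorem sum_tangentConeTails {M : Type*} [AddCommMonoid M] (f : ℕ × ℕ × ℕ → M) :
    ∑ t ∈ tangentConeTails α₂ α₃ k, f t =
      f (0, 0, 1) + ∑ b ∈ Finset.range (k * α₂ + 1), f (b, 0, 0) +
        ∑ b ∈ Finset.range α₂, ∑ c ∈ Finset.Ico 1 α₃, f (b, c, 0) := by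
  rw [tangentConeTails, Finset.sum_union, Finset.sum_union, Finset.sum_singleton,
    Finset.sum_product, Finset.sum_product]
  · simp only [Finset.sum_singleton, Finset.sum_product]
  · simp
  · rw [Finset.disjoint_left]
    rintro ⟨b, c, e⟩
    simp only [Finset.mem_union, Finset.mem_singleton, Finset.mem_product, Prod.mk.injEq,
      Finset.mem_range, Finset.mem_Ico]
    omega

variable {R : Type*} [CommRing R]

theorem one_sub_X_mul_sum_Ico_X_pow_mul_onesBelow (hk₀ : 0 < k) (hk : k ≤ α₃) :
    (1 - PowerSeries.X) * ∑ c ∈ Finset.Ico 1 α₃, (PowerSeries.X : PowerSeries R) ^ c *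
        onesBelow (if c ≤ α₃ - k then ⊤ else (x₁Exp α₁ α₂₁ (α₃ - c) : ℕ∞)) =
      ∑ c ∈ Finset.Ico 1 α₃, PowerSeries.X ^ c -
        ∑ j ∈ Finset.Icc 2 k,
          PowerSeries.X ^ ((k - j) * α₁ + (k - j + 2) * α₂₁ + α₃ + j - k) := by
  have hterm : ∀ c, (1 - PowerSeries.X) * ((PowerSeries.X : PowerSeries R) ^ c *
      onesBelow (if c ≤ α₃ - k then ⊤ else (x₁Exp α₁ α₂₁ (α₃ - c) : ℕ∞))) =
      PowerSeries.X ^ c -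
        if c ≤ α₃ - k then 0 else PowerSeries.X ^ (c + x₁Exp α₁ α₂₁ (α₃ - c)) := by
    intro c
    rw [mul_left_comm]
    split_ifs
    · rw [PowerSeries.one_sub_X_mul_onesBelow_top, mul_one, sub_zero]
    · rw [PowerSeries.one_sub_X_mul_onesBelow_coe, pow_add]; ring
  rw [Finset.mul_sum, Finset.sum_congr rfl fun c _ => hterm c, Finset.sum_sub_distrib,
    Finset.sum_ite, Finset.sum_const_zero, zero_add]
  congr 1
  -- the generator with index `α₃ - c` is the one numbered `j = k + 1 - (α₃ - c)` in `P(t)`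
  refine Finset.sum_nbij' (fun c => c + k + 1 - α₃) (fun j => α₃ + j - k - 1)
    ?_ ?_ ?_ ?_ ?_ <;> simp only [Finset.mem_filter, Finset.mem_Ico, Finset.mem_Icc]
  · omega
  · omega
  · omega
  · omega
  · intro c ⟨_, hc⟩
    have h₁ : α₃ - c - 1 = k - (c + k + 1 - α₃) := by omega
    have h₂ : α₃ - c + 1 = k - (c + k + 1 - α₃) + 2 := by omega
    rw [x₁Exp, h₁, h₂]
    congr 1
    omega

theorem one_sub_X_pow_four_mul_sum_tangentConeTails (hk₀ : 0 < k) (hk : k ≤ α₃) :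
    (1 - PowerSeries.X : PowerSeries R) ^ 4 *
        ∑ t ∈ tangentConeTails α₂ α₃ k,
          PowerSeries.X ^ (tailExp t).degree * onesBelow (tangentConeRayLength α₁ α₃ α₂₁ k t) =
      1 - 3 * PowerSeries.X ^ 2 + 3 * PowerSeries.X ^ 3 - PowerSeries.X ^ 4
        - PowerSeries.X ^ (α₂₁ + 1) * (1 - PowerSeries.X) ^ 3
        - PowerSeries.X ^ α₃ * (1 - PowerSeries.X)
        - PowerSeries.X ^ (α₂ + 1) * (1 - PowerSeries.X) *
            (1 - PowerSeries.X ^ (α₃ - 1))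
        - PowerSeries.X ^ (k * α₂ + 1) * (1 - PowerSeries.X) ^ 2
        - ∑ j ∈ Finset.Icc 2 k,
            PowerSeries.X ^ ((k - j) * α₁ + (k - j + 2) * α₂₁ + α₃ + j - k) *
              (1 - PowerSeries.X) ^ 2 * (1 - PowerSeries.X ^ α₂) := by
  have hQ := one_sub_X_mul_sum_Ico_X_pow_mul_onesBelow (R := R) (α₁ := α₁) (α₂₁ := α₂₁) hk₀ hk
  set X : PowerSeries R := PowerSeries.X
  set Q := ∑ c ∈ Finset.Ico 1 α₃,
    X ^ c * onesBelow (if c ≤ α₃ - k then ⊤ else (x₁Exp α₁ α₂₁ (α₃ - c) : ℕ∞))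
  have hsum : ∑ t ∈ tangentConeTails α₂ α₃ k,
      X ^ (tailExp t).degree * onesBelow (tangentConeRayLength α₁ α₃ α₂₁ k t) =
        X * onesBelow α₂₁ + (∑ b ∈ Finset.range (k * α₂ + 1), X ^ b) * onesBelow ⊤ +
          (∑ b ∈ Finset.range α₂, X ^ b) * Q := by
    rw [Finset.sum_mul_sum, Finset.sum_mul, sum_tangentConeTails]
    simp [degree_tailExp, tangentConeRayLength, pow_add, mul_assoc]
  have hS := geom_sum_Ico_mul_neg X (show 1 ≤ α₃ by omega)
  have hX : X ^ α₃ = X ^ (α₃ - 1) * X := by rw [← pow_succ]; congr 1; omega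
  rw [hsum, ← Finset.sum_mul, ← Finset.sum_mul]
  linear_combination X * (1 - X) ^ 3 * PowerSeries.one_sub_X_mul_onesBelow_coe (R := R) α₂₁ +
    (1 - X) ^ 2 * ((1 - X) * ∑ b ∈ Finset.range (k * α₂ + 1), X ^ b) *
      PowerSeries.one_sub_X_mul_onesBelow_top (R := R) +
    (1 - X) ^ 2 * mul_neg_geom_sum X (k * α₂ + 1) +
    (1 - X) ^ 2 * ((1 - X) * Q) * mul_neg_geom_sum X α₂ +
    (1 - X) ^ 2 * (1 - X ^ α₂) * hQ + (1 - X) * (1 - X ^ α₂) * hS + X ^ α₂ * (1 - X) * hX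

end TangentCone

theorem stmt8_general (K : Type*) [Field K] (α₁ α₂ α₃ α₂₁ k : ℕ)
    (hk₀ : 0 < k) (hkα₃ : k ≤ α₃)
    (J : Ideal (MvPolynomial (Fin 4) K))
    (hJ : J = Ideal.span (({X 2 * X 3,
                            X 0 ^ α₂₁ * X 3,
                            X 2 ^ α₃,
                            X 3 ^ 2,
                            X 1 * X 3,
                            X 1 ^ α₂ * X 2,
                            X 1 ^ (k * α₂ + 1)} :
          Set (MvPolynomial (Fin 4) K)) ∪
        {g | ∃ j : ℕ, 1 ≤ j ∧ j ≤ k - 1 ∧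
          g = X 0 ^ ((j - 1) * α₁ + (j + 1) * α₂₁ + 1) * X 2 ^ (α₃ - j)})) :
    (1 - PowerSeries.X : PowerSeries ℤ) ^ 4 *
        PowerSeries.mk (fun n => (gradedHilbert K J n : ℤ)) =
      1 - 3 * PowerSeries.X ^ 2 + 3 * PowerSeries.X ^ 3 - PowerSeries.X ^ 4
        - PowerSeries.X ^ (α₂₁ + 1) * (1 - PowerSeries.X) ^ 3
        - PowerSeries.X ^ α₃ * (1 - PowerSeries.X)
        - PowerSeries.X ^ (α₂ + 1) * (1 - PowerSeries.X) *
            (1 - PowerSeries.X ^ (α₃ - 1))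
        - PowerSeries.X ^ (k * α₂ + 1) * (1 - PowerSeries.X) ^ 2
        - ∑ j ∈ Finset.Icc 2 k,
            PowerSeries.X ^ ((k - j) * α₁ + (k - j + 2) * α₂₁ + α₃ + j - k) *
              (1 - PowerSeries.X) ^ 2 * (1 - PowerSeries.X ^ α₂) := by
  rw [← image_monomial_tangentConeExps] at hJ
  subst hJ
  unfold gradedHilbert
  rw [hilbertSeries_eq_sum_rays (fun t _ => tailExp_apply_zero t) tailExp_injective.injOn
    (forall_not_le_tangentConeExps_iff hk₀ hkα₃)]
  exact one_sub_X_pow_four_mul_sum_tangentConeTails hk₀ hkα₃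

/-- First Hilbert series of the monomial ideal arising as the tangent cone ideal of a
4-generated pseudo-symmetric monomial curve with `α₄ = 2`.
(Variables: `X 0 = X₁`, `X 1 = X₂`, `X 2 = X₃`, `X 3 = X₄`.) -/
theorem stmt8 (K : Type*) [Field K] (α₁ α₂ α₃ α₂₁ k : ℕ)
    (h₁ : 1 < α₁) (h₂ : 1 < α₂) (h₃ : 1 < α₃)
    (h₂₁ : 0 < α₂₁) (h₂₁' : α₂₁ < α₁ - 1)
    (hk₀ : 0 < k) (hkα₃ : k ≤ α₃)
    (J : Ideal (MvPolynomial (Fin 4) K))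
    (hJ : J = Ideal.span (({X 2 * X 3,
                            X 0 ^ α₂₁ * X 3,
                            X 2 ^ α₃,
                            X 3 ^ 2,
                            X 1 * X 3,
                            X 1 ^ α₂ * X 2,
                            X 1 ^ (k * α₂ + 1)} :
          Set (MvPolynomial (Fin 4) K)) ∪
        {g | ∃ j : ℕ, 1 ≤ j ∧ j ≤ k - 1 ∧
          g = X 0 ^ ((j - 1) * α₁ + (j + 1) * α₂₁ + 1) * X 2 ^ (α₃ - j)})) :
    (1 - PowerSeries.X : PowerSeries ℤ) ^ 4 *
        PowerSeries.mk (fun n => (gradedHilbert K J n : ℤ)) =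
      1 - 3 * PowerSeries.X ^ 2 + 3 * PowerSeries.X ^ 3 - PowerSeries.X ^ 4
        - PowerSeries.X ^ (α₂₁ + 1) * (1 - PowerSeries.X) ^ 3
        - PowerSeries.X ^ α₃ * (1 - PowerSeries.X)
        - PowerSeries.X ^ (α₂ + 1) * (1 - PowerSeries.X) *
            (1 - PowerSeries.X ^ (α₃ - 1))
        - PowerSeries.X ^ (k * α₂ + 1) * (1 - PowerSeries.X) ^ 2
        - ∑ j ∈ Finset.Icc 2 k,
            PowerSeries.X ^ ((k - j) * α₁ + (k - j + 2) * α₂₁ + α₃ + j - k) *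
              (1 - PowerSeries.X) ^ 2 * (1 - PowerSeries.X ^ α₂) :=
  stmt8_general K α₁ α₂ α₃ α₂₁ k hk₀ hkα₃ J hJ
end

section
/- Let α₂, α₃ be integers > 1 and α₂₁ a positive integer with α₂ > α₂₁ + 1. Then the polynomial Q(t) = 1 + t + t(1 + t + … + t^{α₂−1}) + t(1 + t + … + t^{α₂−1})(1 + t + … + t^{α₃−2}) − t^{α₂₁+1} in ℤ[t] has all coefficients nonnegative. -/
open Polynomial Finset

lemma coeff_geom (k n : ℕ) :
    ((∑ i ∈ range k, (X : Polynomial ℤ) ^ i)).coeff n = if n < k then 1 else 0 := by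
  rw [Polynomial.finset_sum_coeff]
  simp only [Polynomial.coeff_X_pow]
  rw [Finset.sum_ite_eq (range k) n (fun _ => (1 : ℤ))]
  simp

lemma coeff_geom_nonneg (k n : ℕ) :
    0 ≤ ((∑ i ∈ range k, (X : Polynomial ℤ) ^ i)).coeff n := by
  rw [coeff_geom]; split <;> norm_num

lemma coeff_mul_geom_nonneg (p : Polynomial ℤ) (hp : ∀ m, 0 ≤ p.coeff m) (k n : ℕ) :
    0 ≤ (p * ∑ i ∈ range k, (X : Polynomial ℤ) ^ i).coeff n := by
  rw [Polynomial.coeff_mul]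
  exact Finset.sum_nonneg fun x _ =>
    mul_nonneg (hp _) (coeff_geom_nonneg _ _)

/-- The second Hilbert series
`Q(t) = 1 + t + t(1 + ⋯ + t^(α₂-1)) + t(1 + ⋯ + t^(α₂-1))(1 + ⋯ + t^(α₃-2)) - t^(α₂₁+1)`
(case `k = 1`) has nonnegative coefficients whenever `α₂, α₃ > 1`, `α₂₁ ≥ 1` and
`α₂ > α₂₁ + 1`. -/
theorem stmt11 (α₂ α₃ α₂₁ : ℕ)
    (h₂ : 1 < α₂) (h₃ : 1 < α₃) (h₂₁ : 0 < α₂₁)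
    (hα2 : α₂ > α₂₁ + 1) :
    ∀ n : ℕ,
      0 ≤ ((1 + X + X * (∑ i ∈ range α₂, X ^ i)
          + X * (∑ i ∈ range α₂, X ^ i) * (∑ i ∈ range (α₃ - 1), X ^ i)
          - X ^ (α₂₁ + 1) : Polynomial ℤ)).coeff n := by
  intro n
  have hXS : ∀ m, 0 ≤ ((X : Polynomial ℤ) * ∑ i ∈ range α₂, X ^ i).coeff m := by
    intro m
    cases m with
    | zero => simp
    | succ m => rw [Polynomial.coeff_X_mul]; exact coeff_geom_nonneg _ _
  have h1 : (0:ℤ) ≤ ((1 : Polynomial ℤ)).coeff n := by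
    rw [Polynomial.coeff_one]; split <;> norm_num
  have hX : (0:ℤ) ≤ ((X : Polynomial ℤ)).coeff n := by
    rw [Polynomial.coeff_X]; split <;> norm_num
  have hprod : (0:ℤ) ≤ ((X : Polynomial ℤ) * (∑ i ∈ range α₂, X ^ i)
      * (∑ i ∈ range (α₃ - 1), X ^ i)).coeff n :=
    coeff_mul_geom_nonneg _ hXS _ _
  rw [Polynomial.coeff_sub, Polynomial.coeff_add, Polynomial.coeff_add,
    Polynomial.coeff_add, Polynomial.coeff_X_pow]
  by_cases hn : n = α₂₁ + 1
  · subst hn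
    have : ((X : Polynomial ℤ) * ∑ i ∈ range α₂, X ^ i).coeff (α₂₁ + 1) = 1 := by
      rw [Polynomial.coeff_X_mul, coeff_geom, if_pos (by omega)]
    rw [this, if_pos rfl]
    linarith
  · rw [if_neg hn]
    have := hXS n
    linarith
end
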